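/- Let J be a linear order, F : J ⥤ Cat, and let ∫F → J be the Grothendieck construction with its projection p. Suppose x = (j, t) with t terminal in F(j). Then the slice category (∫F)/x fits in a pullback: (∫F)/x is equivalent to the Grothendieck construction of F restricted to the sieve J_{≤ j}, i.e., the full subcategory of ∫F on objects (i, a) with i ≤ j. -/

import Mathlib

open CategoryTheory Limits

section Aux

variable {J : Type*} [LinearOrder J] (F : J ⥤ Cat) {j : J} (t : F.obj j)

/-- inclusion of the lower set -/
private def incl13 (j : J) : {i : J // i ≤ j} ⥤ J :=
  Monotone.functor (f := (Subtype.val : {i : J // i ≤ j} → J)) (fun _ _ h => h)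

private lemma homSubsingleton13 (ht : IsTerminal t) (y : Grothendieck F) :
    Subsingleton (y ⟶ (⟨j, t⟩ : Grothendieck F)) := by
  constructor
  intro f g
  have hb : f.base = g.base := Subsingleton.elim _ _
  apply Grothendieck.ext f g hb
  apply ht.hom_ext

/-- The comparison functor. -/
private def cmp13 (ht : IsTerminal t) : Grothendieck (incl13 j ⋙ F) ⥤ Over (⟨j, t⟩ : Grothendieck F) where
  obj X := Over.mk (Y := (Grothendieck.pre F (incl13 j)).obj X)
    (⟨homOfLE X.base.2, ht.from _⟩ : Grothendieck.Hom _ ⟨j, t⟩)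
  map {X Y} f := Over.homMk ((Grothendieck.pre F (incl13 j)).map f)
    ((homSubsingleton13 F t ht _).elim _ _)
  map_id X := by
    ext
    exact (Grothendieck.pre F (incl13 j)).map_id X
  map_comp f g := by
    ext
    exact (Grothendieck.pre F (incl13 j)).map_comp f g

private lemma cmp13_isEquiv (ht : IsTerminal t) : (cmp13 F t ht).IsEquivalence := by
  constructor
  · constructor
    intro X Y f g h
    have h' : (Grothendieck.pre F (incl13 j)).map f = (Grothendieck.pre F (incl13 j)).map g :=
      congrArg CommaMorphism.left h
    have hb : f.base = g.base := Subsingleton.elim _ _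
    apply Grothendieck.ext f g hb
    have hf : f.fiber = eqToHom (by rw [hb]) ≫ g.fiber := Grothendieck.congr h'
    rw [hf]
    simp
  · constructor
    intro X Y h
    have hb : X.base.1 ≤ Y.base.1 := leOfHom h.left.base
    have hbeq : (incl13 j).map (homOfLE hb : X.base ⟶ Y.base) = h.left.base :=
      Subsingleton.elim _ _
    refine ⟨⟨homOfLE hb, eqToHom (by rw [Functor.comp_map, hbeq]; rfl) ≫ h.left.fiber⟩, ?_⟩
    ext
    apply Grothendieck.ext _ _ hbeq
    simp [cmp13]
    erw [Grothendieck.pre_map_fiber, eqToHom_trans_assoc]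
    simp
    rfl
  · constructor
    intro Y
    refine ⟨⟨⟨Y.left.base, leOfHom Y.hom.base⟩, Y.left.fiber⟩, ⟨?_⟩⟩
    refine Over.isoMk (Iso.refl _) ((homSubsingleton13 F t ht _).elim _ _)

end Aux

/-- Let `J` be a linear order, `F : J ⥤ Cat`, and `x = (j, t)` with `t` terminal in the
fiber `F j`. Then the slice `(∫F)/x` is equivalent to the Grothendieck construction of
the restriction of `F` to `{i // i ≤ j}`. -/
theorem statement13 {J : Type*} [LinearOrder J] (F : J ⥤ Cat)
    {j : J} (t : F.obj j) (ht : IsTerminal t) :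
    Nonempty (Over (⟨j, t⟩ : Grothendieck F) ≌
      Grothendieck ((Monotone.functor (f := (Subtype.val : {i : J // i ≤ j} → J))
        (fun _ _ h => h)) ⋙ F)) := by
  have := cmp13_isEquiv F t ht
  exact ⟨(cmp13 F t ht).asEquivalence.symm⟩
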